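/- Let (X, 𝒪_n) and (Y, 𝒪'_n) be operator spaces, let 𝒲_n be a numerical radius norm affiliated with (Y, 𝒪'_n), and let φ : X → Y be a completely bounded linear map. Then the 𝒲-completely bounded norm of φ regarded as a map from (X, 𝒲_max) to (Y, 𝒲_n) is at most 𝒪(φ)_cb. -/

import Mathlib

open scoped ComplexOrder Matrix ENNReal TensorProduct

universe u v

noncomputable section

/-- The block-diagonal sum `x ⊕ y` of two square matrices. -/
def blockDiag {X : Type*} [Zero X] {m n : ℕ} (x : Matrix (Fin m) (Fin m) X)
    (y : Matrix (Fin n) (Fin n) X) : Matrix (Fin (m + n)) (Fin (m + n)) X :=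
  Matrix.submatrix (Matrix.fromBlocks x 0 0 y) finSumFinEquiv.symm finSumFinEquiv.symm

/-- The block matrix `[[0, x], [0, 0]]` with `x` in the upper-right corner. -/
def cornerBlock {X : Type*} [Zero X] {n : ℕ} (x : Matrix (Fin n) (Fin n) X) :
    Matrix (Fin (n + n)) (Fin (n + n)) X :=
  Matrix.submatrix (Matrix.fromBlocks 0 x 0 0) finSumFinEquiv.symm finSumFinEquiv.symm

/-- Multiplication `α x` of a scalar matrix with a matrix over a ℂ-module. -/
def scalarMulLeft {X : Type*} [AddCommMonoid X] [Module ℂ X] {m n k : ℕ}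
    (α : Matrix (Fin m) (Fin n) ℂ) (x : Matrix (Fin n) (Fin k) X) :
    Matrix (Fin m) (Fin k) X :=
  Matrix.of fun i j => ∑ l, α i l • x l j

/-- Multiplication `x β` of a matrix over a ℂ-module with a scalar matrix. -/
def scalarMulRight {X : Type*} [AddCommMonoid X] [Module ℂ X] {m n k : ℕ}
    (x : Matrix (Fin m) (Fin n) X) (β : Matrix (Fin n) (Fin k) ℂ) :
    Matrix (Fin m) (Fin k) X :=
  Matrix.of fun i j => ∑ l, β l j • x i l

/-- Operator norm of a rectangular complex matrix, as an operator ℓ²(Fin n) → ℓ²(Fin m). -/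
def matOpNorm {m n : ℕ} (α : Matrix (Fin m) (Fin n) ℂ) : ℝ :=
  ‖LinearMap.toContinuousLinearMap (Matrix.toEuclideanLin α)‖

/-- The numerical radius of a bounded operator on a complex inner product space. -/
def numRadius {H : Type*} [NormedAddCommGroup H] [InnerProductSpace ℂ H]
    (a : H →L[ℂ] H) : ℝ :=
  ⨆ ξ : {ξ : H // ‖ξ‖ ≤ 1}, ‖(inner ℂ (ξ : H) (a ξ) : ℂ)‖

/-- The bounded operator `Hⁿ → Hᵐ` induced by an `m × n` matrix of bounded operators,
where `Hⁿ` carries the ℓ²-direct sum structure. -/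
def matOpRect {H : Type*} [NormedAddCommGroup H] [InnerProductSpace ℂ H] {m n : ℕ}
    (a : Matrix (Fin m) (Fin n) (H →L[ℂ] H)) :
    (PiLp 2 fun _ : Fin n => H) →L[ℂ] (PiLp 2 fun _ : Fin m => H) :=
  ((PiLp.continuousLinearEquiv 2 ℂ (fun _ : Fin m => H)).symm.toContinuousLinearMap) ∘L
    (ContinuousLinearMap.pi fun i => ∑ j, (a i j).comp (ContinuousLinearMap.proj j)) ∘L
    ((PiLp.continuousLinearEquiv 2 ℂ (fun _ : Fin n => H)).toContinuousLinearMap)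

/-- The bounded operator on `Hⁿ` induced by an `n × n` matrix of bounded operators. -/
def matOp {H : Type*} [NormedAddCommGroup H] [InnerProductSpace ℂ H] {n : ℕ}
    (a : Matrix (Fin n) (Fin n) (H →L[ℂ] H)) :
    (PiLp 2 fun _ : Fin n => H) →L[ℂ] (PiLp 2 fun _ : Fin n => H) :=
  matOpRect a

/-- The numerical radius of a complex `n × n` matrix, acting on `ℂⁿ`. -/
def matNumRadius {n : ℕ} (a : Matrix (Fin n) (Fin n) ℂ) : ℝ :=
  numRadius (LinearMap.toContinuousLinearMap (Matrix.toEuclideanLin a))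

/-- The identification of `M_k(M_n(ℂ))` with `M_{kn}(ℂ)`. -/
def flatten {k n : ℕ} (x : Matrix (Fin k) (Fin k) (Matrix (Fin n) (Fin n) ℂ)) :
    Matrix (Fin (k * n)) (Fin (k * n)) ℂ :=
  Matrix.of fun i j =>
    x (finProdFinEquiv.symm i).1 (finProdFinEquiv.symm j).1
      (finProdFinEquiv.symm i).2 (finProdFinEquiv.symm j).2

/-- An (abstract) numerical radius operator space: a complex vector space `X` together with a
norm `W n` on each matrix space `M_n(X)` satisfying the conditions (WI) and (WII). -/
structure NRNorm (X : Type u) [AddCommGroup X] [Module ℂ X] where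
  W : ∀ n : ℕ, Matrix (Fin n) (Fin n) X → ℝ
  nonneg : ∀ (n : ℕ) (x : Matrix (Fin n) (Fin n) X), 0 ≤ W n x
  eq_zero_iff : ∀ (n : ℕ) (x : Matrix (Fin n) (Fin n) X), W n x = 0 ↔ x = 0
  add_le : ∀ (n : ℕ) (x y : Matrix (Fin n) (Fin n) X), W n (x + y) ≤ W n x + W n y
  smul_eq : ∀ (n : ℕ) (c : ℂ) (x : Matrix (Fin n) (Fin n) X), W n (c • x) = ‖c‖ * W n x
  cond_WI : ∀ (m n : ℕ) (x : Matrix (Fin m) (Fin m) X) (y : Matrix (Fin n) (Fin n) X),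
    W (m + n) (blockDiag x y) = max (W m x) (W n y)
  cond_WII : ∀ (m n : ℕ) (α : Matrix (Fin n) (Fin m) ℂ) (x : Matrix (Fin m) (Fin m) X),
    W n (scalarMulRight (scalarMulLeft α x) αᴴ) ≤ matOpNorm α ^ 2 * W m x

/-- An (abstract) operator space: a complex vector space `X` together with a norm `O n` on each
matrix space `M_n(X)` satisfying Ruan's axioms (OI) and (OII). -/
structure OSNorm (X : Type u) [AddCommGroup X] [Module ℂ X] where
  O : ∀ n : ℕ, Matrix (Fin n) (Fin n) X → ℝ
  nonneg : ∀ (n : ℕ) (x : Matrix (Fin n) (Fin n) X), 0 ≤ O n x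
  eq_zero_iff : ∀ (n : ℕ) (x : Matrix (Fin n) (Fin n) X), O n x = 0 ↔ x = 0
  add_le : ∀ (n : ℕ) (x y : Matrix (Fin n) (Fin n) X), O n (x + y) ≤ O n x + O n y
  smul_eq : ∀ (n : ℕ) (c : ℂ) (x : Matrix (Fin n) (Fin n) X), O n (c • x) = ‖c‖ * O n x
  cond_OI : ∀ (m n : ℕ) (x : Matrix (Fin m) (Fin m) X) (y : Matrix (Fin n) (Fin n) X),
    O (m + n) (blockDiag x y) = max (O m x) (O n y)
  cond_OII : ∀ (m n : ℕ) (α : Matrix (Fin n) (Fin m) ℂ) (x : Matrix (Fin m) (Fin m) X)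
    (β : Matrix (Fin m) (Fin n) ℂ),
    O n (scalarMulRight (scalarMulLeft α x) β) ≤ matOpNorm α * O m x * matOpNorm β

/-- The completely bounded norm (valued in `[0, ∞]`) of a linear map, with respect to given
matrix norm sequences on the domain and the codomain. -/
def cbNorm {X Y : Type*} (WX : ∀ n : ℕ, Matrix (Fin n) (Fin n) X → ℝ)
    (WY : ∀ n : ℕ, Matrix (Fin n) (Fin n) Y → ℝ) (φ : X → Y) : ℝ≥0∞ :=
  ⨆ (n : ℕ) (x : Matrix (Fin n) (Fin n) X) (_ : WX n x ≤ 1),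
    ENNReal.ofReal (WY n (x.map φ))

/-- The maximal numerical radius norm affiliated with an operator space `(X, 𝒪_n)`. -/
def Wmax {X : Type u} [AddCommGroup X] [Module ℂ X] (OS : OSNorm X)
    (n : ℕ) (x : Matrix (Fin n) (Fin n) X) : ℝ :=
  sInf {t | ∃ (r : ℕ) (a : Matrix (Fin n) (Fin r) ℂ) (y : Matrix (Fin r) (Fin r) X)
      (b : Matrix (Fin r) (Fin n) ℂ),
    x = scalarMulRight (scalarMulLeft a y) b ∧ OS.O r y = 1 ∧
      t = (1 / 2) * matOpNorm (a * aᴴ + bᴴ * b)}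

/-- A complex Hilbert space together with a linear map of `X` into its bounded operators. -/
structure HilbertRep (X : Type u) [AddCommGroup X] [Module ℂ X] where
  H : Type u
  [instN : NormedAddCommGroup H]
  [instI : InnerProductSpace ℂ H]
  [instC : CompleteSpace H]
  Φ : X →ₗ[ℂ] (H →L[ℂ] H)

attribute [instance] HilbertRep.instN HilbertRep.instI HilbertRep.instC

end

/-!
Write `c = [a | bᴴ]` for the row block of `a` and `bᴴ`. Then `a z b = c (cornerBlock z) cᴴ`
and `c cᴴ = a aᴴ + bᴴ b`, so (WII) and (OW) give `𝒲_n(a z b) ≤ ½ ‖a aᴴ + bᴴ b‖ 𝒪'_r(z)` for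
every affiliated `𝒲`. Since `φ_n(a y b) = a φ_r(y) b` and `𝒪'_r(φ_r(y)) ≤ 𝒪(φ)_cb` when
`𝒪_r(y) = 1`, taking the infimum over all such factorizations of `x` gives
`𝒲_n(φ_n(x)) ≤ 𝒲_max(x) 𝒪(φ)_cb`.
-/

section RowBlock

open scoped Matrix.Norms.L2Operator

lemma matOpNorm_sq {m n : ℕ} (α : Matrix (Fin m) (Fin n) ℂ) :
    matOpNorm α ^ 2 = matOpNorm (α * αᴴ) := by
  have h := Matrix.l2_opNorm_conjTranspose_mul_self αᴴ
  rw [Matrix.conjTranspose_conjTranspose, Matrix.l2_opNorm_conjTranspose] at h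
  exact (sq _).trans h.symm

variable {n r : ℕ}

def rowBlock (a : Matrix (Fin n) (Fin r) ℂ) (b : Matrix (Fin r) (Fin n) ℂ) :
    Matrix (Fin n) (Fin (r + r)) ℂ :=
  Matrix.of fun i => Fin.append (a i) (bᴴ i)

lemma rowBlock_mul_conjTranspose (a : Matrix (Fin n) (Fin r) ℂ) (b : Matrix (Fin r) (Fin n) ℂ) :
    rowBlock a b * (rowBlock a b)ᴴ = a * aᴴ + bᴴ * b := by
  ext i j
  simp [rowBlock, Matrix.mul_apply, Fin.sum_univ_add, mul_comm, -Fin.natAdd_eq_addNat]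

lemma scalarMul_rowBlock_cornerBlock {Y : Type*} [AddCommGroup Y] [Module ℂ Y]
    (a : Matrix (Fin n) (Fin r) ℂ) (b : Matrix (Fin r) (Fin n) ℂ) (z : Matrix (Fin r) (Fin r) Y) :
    scalarMulRight (scalarMulLeft (rowBlock a b) (cornerBlock z)) (rowBlock a b)ᴴ =
      scalarMulRight (scalarMulLeft a z) b := by
  ext i j
  simp [rowBlock, cornerBlock, scalarMulLeft, scalarMulRight, Fin.sum_univ_add,
    -Fin.natAdd_eq_addNat]

end RowBlock

theorem NRNorm.W_scalarMul_le {Y : Type*} [AddCommGroup Y] [Module ℂ Y] (OS' : OSNorm Y)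
    (WN' : NRNorm Y)
    (hOW' : ∀ (n : ℕ) (y : Matrix (Fin n) (Fin n) Y),
      WN'.W (n + n) (cornerBlock y) = (1 / 2) * OS'.O n y)
    {n r : ℕ} (a : Matrix (Fin n) (Fin r) ℂ) (z : Matrix (Fin r) (Fin r) Y)
    (b : Matrix (Fin r) (Fin n) ℂ) :
    WN'.W n (scalarMulRight (scalarMulLeft a z) b) ≤
      (1 / 2) * matOpNorm (a * aᴴ + bᴴ * b) * OS'.O r z := by
  calc WN'.W n (scalarMulRight (scalarMulLeft a z) b)
      = WN'.W n (scalarMulRight (scalarMulLeft (rowBlock a b) (cornerBlock z))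
          (rowBlock a b)ᴴ) := by rw [scalarMul_rowBlock_cornerBlock]
    _ ≤ matOpNorm (rowBlock a b) ^ 2 * WN'.W (r + r) (cornerBlock z) := WN'.cond_WII _ _ _ _
    _ = (1 / 2) * matOpNorm (a * aᴴ + bᴴ * b) * OS'.O r z := by
      rw [hOW', matOpNorm_sq, rowBlock_mul_conjTranspose]; ring

section Factorization

variable {X : Type*} [AddCommGroup X] [Module ℂ X]

lemma map_scalarMul {Y : Type*} [AddCommGroup Y] [Module ℂ Y] (φ : X →ₗ[ℂ] Y) {m n k : ℕ}
    (a : Matrix (Fin m) (Fin n) ℂ) (x : Matrix (Fin n) (Fin n) X) (b : Matrix (Fin n) (Fin k) ℂ) :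
    (scalarMulRight (scalarMulLeft a x) b).map φ =
      scalarMulRight (scalarMulLeft a (x.map φ)) b := by
  ext i j
  simp [scalarMulLeft, scalarMulRight]

lemma scalarMulLeft_smul_one {n : ℕ} (c : ℂ) (x : Matrix (Fin n) (Fin n) X) :
    scalarMulLeft (c • (1 : Matrix (Fin n) (Fin n) ℂ)) x = c • x := by
  ext i j
  simp [scalarMulLeft, Matrix.one_apply, ite_smul]

lemma scalarMulRight_one {m n : ℕ} (x : Matrix (Fin m) (Fin n) X) :
    scalarMulRight x (1 : Matrix (Fin n) (Fin n) ℂ) = x := by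
  ext i j
  simp [scalarMulRight, Matrix.one_apply, ite_smul]

lemma OSNorm.exists_factorization (OS : OSNorm X) {n : ℕ} {x : Matrix (Fin n) (Fin n) X}
    (hx : x ≠ 0) :
    ∃ (a : Matrix (Fin n) (Fin n) ℂ) (y : Matrix (Fin n) (Fin n) X) (b : Matrix (Fin n) (Fin n) ℂ),
      x = scalarMulRight (scalarMulLeft a y) b ∧ OS.O n y = 1 := by
  have hO : 0 < OS.O n x := (OS.nonneg n x).lt_of_ne' fun h => hx ((OS.eq_zero_iff n x).1 h)
  have hOC : ((OS.O n x : ℝ) : ℂ) ≠ 0 := Complex.ofReal_ne_zero.2 hO.ne'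
  refine ⟨((OS.O n x : ℝ) : ℂ) • 1, ((OS.O n x : ℝ) : ℂ)⁻¹ • x, 1, ?_, ?_⟩
  · rw [scalarMulRight_one, scalarMulLeft_smul_one, smul_smul, mul_inv_cancel₀ hOC, one_smul]
  · rw [OS.smul_eq, norm_inv, Complex.norm_real, Real.norm_of_nonneg hO.le, inv_mul_cancel₀ hO.ne']

lemma le_sInf_mul {S : Set ℝ} (hS : S.Nonempty) {c K : ℝ} (hK : 0 ≤ K)
    (h : ∀ t ∈ S, c ≤ t * K) : c ≤ sInf S * K := by
  rw [mul_comm, ← smul_eq_mul, ← Real.sInf_smul_of_nonneg hK]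
  refine le_csInf hS.smul_set ?_
  rintro _ ⟨t, ht, rfl⟩
  exact (h t ht).trans_eq (mul_comm t K)

lemma Wmax_nonneg (OS : OSNorm X) (n : ℕ) (x : Matrix (Fin n) (Fin n) X) : 0 ≤ Wmax OS n x :=
  Real.sInf_nonneg fun _ ⟨_, _, _, _, _, _, ht⟩ => ht ▸ mul_nonneg (by norm_num) (norm_nonneg _)

lemma le_Wmax_mul (OS : OSNorm X) {n : ℕ} {x : Matrix (Fin n) (Fin n) X} (hx : x ≠ 0)
    {c K : ℝ} (hK : 0 ≤ K)
    (h : ∀ (r : ℕ) (a : Matrix (Fin n) (Fin r) ℂ) (y : Matrix (Fin r) (Fin r) X)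
      (b : Matrix (Fin r) (Fin n) ℂ), x = scalarMulRight (scalarMulLeft a y) b → OS.O r y = 1 →
        c ≤ (1 / 2) * matOpNorm (a * aᴴ + bᴴ * b) * K) :
    c ≤ Wmax OS n x * K := by
  obtain ⟨a, y, b, hxy, hy⟩ := OS.exists_factorization hx
  unfold Wmax
  refine le_sInf_mul ?_ hK ?_
  · exact ⟨_, n, a, y, b, hxy, hy, rfl⟩
  · rintro _ ⟨r, a, y, b, hxy, hy, rfl⟩
    exact h r a y b hxy hy

end Factorization

lemma le_toReal_cbNorm {X Y : Type*} {WX : ∀ n : ℕ, Matrix (Fin n) (Fin n) X → ℝ}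
    {WY : ∀ n : ℕ, Matrix (Fin n) (Fin n) Y → ℝ} {φ : X → Y} (hφ : cbNorm WX WY φ ≠ ⊤) {n : ℕ}
    {x : Matrix (Fin n) (Fin n) X} (hx : WX n x ≤ 1) :
    WY n (x.map φ) ≤ (cbNorm WX WY φ).toReal :=
  (ENNReal.ofReal_le_iff_le_toReal hφ).1 <|
    le_iSup_of_le n <| le_iSup_of_le x <| le_iSup_of_le hx le_rfl

theorem NRNorm.W_map_le_Wmax_mul {X Y : Type*} [AddCommGroup X] [Module ℂ X] [AddCommGroup Y]
    [Module ℂ Y] (OS : OSNorm X) (OS' : OSNorm Y) (WN' : NRNorm Y)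
    (hOW' : ∀ (n : ℕ) (y : Matrix (Fin n) (Fin n) Y),
      WN'.W (n + n) (cornerBlock y) = (1 / 2) * OS'.O n y)
    (φ : X →ₗ[ℂ] Y) {K : ℝ} (hK₀ : 0 ≤ K)
    (hK : ∀ (r : ℕ) (y : Matrix (Fin r) (Fin r) X), OS.O r y = 1 → OS'.O r (y.map φ) ≤ K)
    {n : ℕ} (x : Matrix (Fin n) (Fin n) X) :
    WN'.W n (x.map φ) ≤ Wmax OS n x * K := by
  by_cases hx : x = 0
  · rw [hx, Matrix.map_zero φ (map_zero φ), (WN'.eq_zero_iff n 0).2 rfl]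
    exact mul_nonneg (Wmax_nonneg OS n 0) hK₀
  refine le_Wmax_mul OS hx hK₀ fun r a y b hxy hy => ?_
  rw [hxy, map_scalarMul]
  calc _ ≤ (1 / 2) * matOpNorm (a * aᴴ + bᴴ * b) * OS'.O r (y.map φ) :=
        WN'.W_scalarMul_le OS' hOW' a _ b
    _ ≤ (1 / 2) * matOpNorm (a * aᴴ + bᴴ * b) * K :=
        mul_le_mul_of_nonneg_left (hK r y hy) (mul_nonneg (by norm_num) (norm_nonneg _))

theorem stmt_16_general {X : Type u} {Y : Type v} [AddCommGroup X] [Module ℂ X]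
    [AddCommGroup Y] [Module ℂ Y] (OS : OSNorm X) (OS' : OSNorm Y) (WN' : NRNorm Y)
    (hOW' : ∀ (n : ℕ) (y : Matrix (Fin n) (Fin n) Y),
      WN'.W (n + n) (cornerBlock y) = (1 / 2) * OS'.O n y)
    (φ : X →ₗ[ℂ] Y) :
    cbNorm (Wmax OS) WN'.W ⇑φ ≤ cbNorm OS.O OS'.O ⇑φ := by
  set C := cbNorm OS.O OS'.O ⇑φ
  rcases eq_or_ne C ⊤ with hC | hC
  · exact hC ▸ le_top
  refine iSup₂_le fun n x => iSup_le fun hx => (ENNReal.ofReal_le_iff_le_toReal hC).2 ?_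
  calc WN'.W n (x.map φ) ≤ Wmax OS n x * C.toReal :=
        WN'.W_map_le_Wmax_mul OS OS' hOW' φ ENNReal.toReal_nonneg
          (fun r y hy => le_toReal_cbNorm hC hy.le) x
    _ ≤ C.toReal := mul_le_of_le_one_left ENNReal.toReal_nonneg hx

/-- Lemma 3.7: if `𝒲` is affiliated with `(Y, 𝒪'_n)` and `φ : X → Y` is completely
bounded, then `𝒲(φ : 𝒲_max(X) → 𝒲(Y))_cb ≤ 𝒪(φ)_cb`. -/
theorem stmt_16 {X : Type u} {Y : Type v} [AddCommGroup X] [Module ℂ X]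
    [AddCommGroup Y] [Module ℂ Y] (OS : OSNorm X) (OS' : OSNorm Y) (WN' : NRNorm Y)
    (hOW' : ∀ (n : ℕ) (y : Matrix (Fin n) (Fin n) Y),
      WN'.W (n + n) (cornerBlock y) = (1 / 2) * OS'.O n y)
    (φ : X →ₗ[ℂ] Y) (hcb : cbNorm OS.O OS'.O ⇑φ ≠ ⊤) :
    cbNorm (Wmax OS) WN'.W ⇑φ ≤ cbNorm OS.O OS'.O ⇑φ :=
  stmt_16_general OS OS' WN' hOW' φ
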